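/- Let p ≥ 2 be an integer and suppose τ_L ≠ 1. Then for every x ∈ ℝ, the composition f_L^{p−1} ∘ f_R maps (x, 0) to (x′, 0), where x′ = τ_L^{p−2}(τ_L τ_R − δ_R) x + ((1 − τ_L^p)/(1 − τ_L)) μ. Moreover, if additionally τ_L ≠ 0, μ ≠ 0, and τ_L^{p−2}(τ_L τ_R − δ_R) ≠ 1, then the unique fixed point x* = ((1 − τ_L^p) μ)/((1 − τ_L)(1 − τ_L^{p−2}(τ_L τ_R − δ_R))) of the induced one-dimensional affine map satisfies x* = μ if and only if δ_R = τ_L τ_R − (1/τ_L^{p−2})(1 − (1 − τ_L^p)/(1 − τ_L)) (the border-collision boundary γ′_p of the L^{p−1}R-cycle). -/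
import Mathlib


/-- The left piece of the border-collision normal form with zero left determinant. -/
def fL (τL μ : ℝ) (p : ℝ × ℝ) : ℝ × ℝ := (τL * p.1 + p.2 + μ, 0)

/-- The right piece of the border-collision normal form with zero left determinant. -/
def fR (τR δR μ : ℝ) (p : ℝ × ℝ) : ℝ × ℝ := (τR * p.1 + p.2 + μ, -δR * p.1)

lemma iterL (τL μ : ℝ) : ∀ (n : ℕ) (a : ℝ),
    (fL τL μ)^[n] (a, 0) = (τL ^ n * a + μ * ∑ i ∈ Finset.range n, τL ^ i, 0) := by
  intro n
  induction n with
  | zero => intro a; simp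
  | succ n ih =>
    intro a
    rw [Function.iterate_succ_apply, show fL τL μ (a, 0) = (τL * a + μ, 0) by simp [fL], ih]
    ext
    · simp only [add_comm 1 n, Finset.sum_range_succ]
      ring
    · rfl

/-- for `p ≥ 2` and `τL ≠ 1`, the composition `fL^(p-1) ∘ fR` maps
`(x, 0)` to `(x', 0)` with `x' = τL^(p-2)(τL τR - δR) x + ((1 - τL^p)/(1 - τL)) μ`.
Moreover, if also `τL ≠ 0`, `μ ≠ 0`, and `τL^(p-2)(τL τR - δR) ≠ 1`, then the unique
fixed point `x* = ((1 - τL^p) μ)/((1 - τL)(1 - τL^(p-2)(τL τR - δR)))` of the induced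
affine map satisfies `x* = μ` iff
`δR = τL τR - (1/τL^(p-2))(1 - (1 - τL^p)/(1 - τL))` (the boundary `γ'_p`). -/
theorem stmt_19 (τL τR δR μ : ℝ) (p : ℕ) (hp : 2 ≤ p) (hτ : τL ≠ 1) :
    (∀ x : ℝ, (fL τL μ)^[p - 1] (fR τR δR μ (x, 0)) =
      (τL ^ (p - 2) * (τL * τR - δR) * x + ((1 - τL ^ p) / (1 - τL)) * μ, 0)) ∧
    (τL ≠ 0 → μ ≠ 0 → τL ^ (p - 2) * (τL * τR - δR) ≠ 1 →
      (∀ x : ℝ, τL ^ (p - 2) * (τL * τR - δR) * x + ((1 - τL ^ p) / (1 - τL)) * μ = x ↔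
        x = ((1 - τL ^ p) * μ) / ((1 - τL) * (1 - τL ^ (p - 2) * (τL * τR - δR)))) ∧
      (((1 - τL ^ p) * μ) / ((1 - τL) * (1 - τL ^ (p - 2) * (τL * τR - δR))) = μ ↔
        δR = τL * τR - (1 / τL ^ (p - 2)) * (1 - (1 - τL ^ p) / (1 - τL)))) := by
  have hτ1 : (1 : ℝ) - τL ≠ 0 := sub_ne_zero.mpr (Ne.symm hτ)
  have hgeom : ∀ n : ℕ, ∑ i ∈ Finset.range n, τL ^ i = (1 - τL ^ n) / (1 - τL) := by
    intro n
    rw [geom_sum_eq hτ, div_eq_div_iff (sub_ne_zero.mpr hτ) hτ1]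
    ring
  constructor
  · intro x
    obtain ⟨q, hq⟩ : ∃ q, p = q + 2 := ⟨p - 2, by omega⟩
    subst hq
    have h1 : q + 2 - 1 = q + 1 := rfl
    have h2 : q + 2 - 2 = q := rfl
    rw [h1, h2]
    have hfr : fR τR δR μ (x, 0) = (τR * x + 0 + μ, -δR * x) := rfl
    rw [hfr, Function.iterate_succ_apply,
      show fL τL μ (τR * x + 0 + μ, -δR * x) = (τL * (τR * x + 0 + μ) + -δR * x + μ, 0) from rfl,
      iterL, hgeom]
    ext
    · simp only
      field_simp
      ring
    · rfl
  · intro hτ0 hμ hAB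
    have hA1 : (1 : ℝ) - τL ^ (p - 2) * (τL * τR - δR) ≠ 0 := sub_ne_zero.mpr (Ne.symm hAB)
    have hτp : τL ^ (p - 2) ≠ 0 := pow_ne_zero _ hτ0
    constructor
    · intro x
      rw [eq_div_iff (mul_ne_zero hτ1 hA1)]
      constructor
      · intro h
        field_simp at h
        linear_combination -h
      · intro h
        field_simp at h ⊢
        linear_combination -h
    · constructor
      · intro h
        rw [div_eq_iff (mul_ne_zero hτ1 hA1)] at h
        have h2 : (1 : ℝ) - τL ^ p = (1 - τL) * (1 - τL ^ (p - 2) * (τL * τR - δR)) := by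
          have := mul_right_cancel₀ hμ (h.trans (mul_comm _ _))
          linarith [this]
        field_simp
        linear_combination -h2
      · intro h
        subst h
        rw [div_eq_iff (mul_ne_zero hτ1 hA1)]
        field_simp
        ring
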